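/- Let K > 0 be the sharp constant in the Euclidean Sobolev inequality ‖u‖_{2*} ≤ K ‖∇u‖_2 for u ∈ C_c^∞(ℝ^n), n ≥ 3, 2* = 2n/(n-2). Then for every integer p ≥ 1, the infimum of ∑_{i=1}^p ∫_{ℝ^n} |∇u_i|^2 dx over all p-tuples (u_1,...,u_p) of functions in the completion of C_c^∞(ℝ^n) under ‖∇·‖_2 satisfying ∑_{i=1}^p ∫_{ℝ^n} |u_i|^{2*} dx = 1, equals K^{-2}. In other words, the sharp Sobolev constant for vector-valued maps is the same as in the scalar case. -/

import Mathlib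

open MeasureTheory

/-- If `K` is the sharp constant in the Euclidean Sobolev inequality
`‖u‖_{2*} ≤ K ‖∇u‖_2` on `ℝⁿ`, `n ≥ 3`, `2* = 2n/(n-2)`, then for every `p ≥ 1`
the infimum of `∑ᵢ ∫ |∇uᵢ|²` over `p`-tuples with `∑ᵢ ∫ |uᵢ|^{2*} = 1`
equals `K⁻²`. -/
theorem stmt_1 (n : ℕ) (hn : 3 ≤ n) (K : ℝ) (hK : 0 < K)
    (hSob : ∀ u : EuclideanSpace ℝ (Fin n) → ℝ, ContDiff ℝ (⊤ : ℕ∞) u → HasCompactSupport u →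
      (∫ x, |u x| ^ (2 * (n : ℝ) / ((n : ℝ) - 2))) ^ (((n : ℝ) - 2) / (2 * (n : ℝ))) ≤
        K * (∫ x, ‖fderiv ℝ u x‖ ^ 2) ^ ((1 : ℝ) / 2))
    (hsharp : ∀ K' : ℝ,
      (∀ u : EuclideanSpace ℝ (Fin n) → ℝ, ContDiff ℝ (⊤ : ℕ∞) u → HasCompactSupport u →
        (∫ x, |u x| ^ (2 * (n : ℝ) / ((n : ℝ) - 2))) ^ (((n : ℝ) - 2) / (2 * (n : ℝ))) ≤
          K' * (∫ x, ‖fderiv ℝ u x‖ ^ 2) ^ ((1 : ℝ) / 2)) → K ≤ K')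
    (p : ℕ) (hp : 1 ≤ p) :
    IsGLB {S : ℝ | ∃ U : Fin p → EuclideanSpace ℝ (Fin n) → ℝ,
        (∀ i, ContDiff ℝ (⊤ : ℕ∞) (U i) ∧ HasCompactSupport (U i)) ∧
        (∑ i, ∫ x, |U i x| ^ (2 * (n : ℝ) / ((n : ℝ) - 2))) = 1 ∧
        S = ∑ i, ∫ x, ‖fderiv ℝ (U i) x‖ ^ 2} (K⁻¹ ^ 2) := by
  have hn3 : (3 : ℝ) ≤ (n : ℝ) := by exact_mod_cast hn
  set q : ℝ := 2 * (n : ℝ) / ((n : ℝ) - 2) with hqdef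
  set a : ℝ := ((n : ℝ) - 2) / (2 * (n : ℝ)) with hadef
  have hnpos : (0 : ℝ) < (n : ℝ) := by linarith
  have hn2 : (0 : ℝ) < (n : ℝ) - 2 := by linarith
  have hapos : 0 < a := div_pos hn2 (by linarith)
  have hqpos : 0 < q := div_pos (by linarith) hn2
  have h2a1 : 2 * a ≤ 1 := by
    rw [hadef, show (2:ℝ) * (((n:ℝ) - 2) / (2 * (n:ℝ))) = ((n:ℝ) - 2) / (n:ℝ) from by
      field_simp, div_le_one hnpos]
    linarith
  have h2a1' : 2 * a ≤ 1 := h2a1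
  have hqa : q * a = 1 := by
    rw [hqdef, hadef]; field_simp
  constructor
  · -- lower bound
    rintro S ⟨U, hU, hsum, rfl⟩
    have ht0 : ∀ i, 0 ≤ ∫ x, |U i x| ^ q :=
      fun i => integral_nonneg fun x => Real.rpow_nonneg (abs_nonneg _) _
    have hs0 : ∀ i, 0 ≤ ∫ x, ‖fderiv ℝ (U i) x‖ ^ 2 :=
      fun i => integral_nonneg fun x => by positivity
    have key : ∀ i, (∫ x, |U i x| ^ q) ^ (2 * a) ≤ K ^ 2 * ∫ x, ‖fderiv ℝ (U i) x‖ ^ 2 := by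
      intro i
      have h := hSob (U i) (hU i).1 (hU i).2
      calc (∫ x, |U i x| ^ q) ^ (2 * a) = ((∫ x, |U i x| ^ q) ^ a) ^ 2 := by
            rw [← Real.rpow_natCast ((∫ x, |U i x| ^ q) ^ a) 2, ← Real.rpow_mul (ht0 i)]
            norm_num [mul_comm]
        _ ≤ (K * (∫ x, ‖fderiv ℝ (U i) x‖ ^ 2) ^ ((1 : ℝ) / 2)) ^ 2 :=
            pow_le_pow_left₀ (Real.rpow_nonneg (ht0 i) _) h 2
        _ = K ^ 2 * ∫ x, ‖fderiv ℝ (U i) x‖ ^ 2 := by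
            rw [mul_pow, ← Real.rpow_natCast ((∫ x, ‖fderiv ℝ (U i) x‖ ^ 2) ^ ((1:ℝ)/2)) 2,
              ← Real.rpow_mul (hs0 i)]
            norm_num
    have hsum2 : (1 : ℝ) ≤ ∑ i, (∫ x, |U i x| ^ q) ^ (2 * a) := by
      rw [← hsum]
      apply Finset.sum_le_sum
      intro i _
      rcases eq_or_lt_of_le (ht0 i) with h0 | h0
      · rw [← h0, Real.zero_rpow (by positivity)]
      · have hti1 : (∫ x, |U i x| ^ q) ≤ 1 := by
          rw [← hsum]
          exact Finset.single_le_sum (fun j _ => ht0 j) (Finset.mem_univ i)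
        calc (∫ x, |U i x| ^ q) = (∫ x, |U i x| ^ q) ^ (1:ℝ) := (Real.rpow_one _).symm
          _ ≤ (∫ x, |U i x| ^ q) ^ (2 * a) :=
              Real.rpow_le_rpow_of_exponent_ge h0 hti1 h2a1
    have hfin : (1 : ℝ) ≤ K ^ 2 * ∑ i, ∫ x, ‖fderiv ℝ (U i) x‖ ^ 2 := by
      rw [Finset.mul_sum]
      exact hsum2.trans (Finset.sum_le_sum fun i _ => key i)
    have hK2 : (0 : ℝ) < K ^ 2 := by positivity
    calc K⁻¹ ^ 2 = (K ^ 2)⁻¹ * 1 := by rw [inv_pow, mul_one]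
      _ ≤ (K ^ 2)⁻¹ * (K ^ 2 * ∑ i, ∫ x, ‖fderiv ℝ (U i) x‖ ^ 2) :=
          mul_le_mul_of_nonneg_left hfin (by positivity)
      _ = ∑ i, ∫ x, ‖fderiv ℝ (U i) x‖ ^ 2 := by field_simp
  · -- greatest lower bound
    intro b hb
    by_contra hcon
    push_neg at hcon
    have hb0 : 0 < b := lt_trans (by positivity) hcon
    have hsb : 0 < Real.sqrt b := Real.sqrt_pos.mpr hb0
    have hK' : ∀ u : EuclideanSpace ℝ (Fin n) → ℝ, ContDiff ℝ (⊤ : ℕ∞) u → HasCompactSupport u →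
        (∫ x, |u x| ^ q) ^ a ≤
          (Real.sqrt b)⁻¹ * (∫ x, ‖fderiv ℝ u x‖ ^ 2) ^ ((1 : ℝ) / 2) := by
      intro u hu1 hu2
      have ht0 : 0 ≤ ∫ x, |u x| ^ q :=
        integral_nonneg fun x => Real.rpow_nonneg (abs_nonneg _) _
      have hs0 : 0 ≤ ∫ x, ‖fderiv ℝ u x‖ ^ 2 := integral_nonneg fun x => by positivity
      rcases eq_or_lt_of_le ht0 with h0 | h0
      · rw [← h0, Real.zero_rpow (ne_of_gt hapos)]
        positivity
      · set t : ℝ := ∫ x, |u x| ^ q with htdef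
        set s : ℝ := ∫ x, ‖fderiv ℝ u x‖ ^ 2 with hsdef
        set c : ℝ := t ^ (-a) with hcdef
        have hc0 : 0 < c := Real.rpow_pos_of_pos h0 _
        set i0 : Fin p := ⟨0, hp⟩ with hi0
        set V : Fin p → EuclideanSpace ℝ (Fin n) → ℝ :=
          fun i => if i = i0 then (fun x => c * u x) else 0 with hVdef
        have hVsm : ∀ i, ContDiff ℝ (⊤ : ℕ∞) (V i) ∧ HasCompactSupport (V i) := by
          intro i
          by_cases h : i = i0
          · simp only [hVdef, h, if_pos rfl]
            exact ⟨contDiff_const.mul hu1, hu2.mul_left⟩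
          · simp only [hVdef, if_neg h]
            refine ⟨contDiff_const, ?_⟩
            simp [HasCompactSupport, tsupport]
        have hVint : ∀ i, (∫ x, |V i x| ^ q) = if i = i0 then c ^ q * t else 0 := by
          intro i
          by_cases h : i = i0
          · simp only [hVdef, h, if_pos rfl]
            have : ∀ x : EuclideanSpace ℝ (Fin n), |c * u x| ^ q = c ^ q * |u x| ^ q := by
              intro x
              rw [abs_mul, Real.mul_rpow (abs_nonneg _) (abs_nonneg _), abs_of_pos hc0]
            rw [htdef]
            simp_rw [this]
            exact integral_const_mul _ _
          · simp only [hVdef, if_neg h, Pi.zero_apply]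
            simp [Real.zero_rpow (ne_of_gt hqpos)]
        have hcq : c ^ q * t = 1 := by
          rw [hcdef, ← Real.rpow_mul ht0]
          · have : -a * q = -1 := by rw [neg_mul, mul_comm, hqa]
            rw [this, Real.rpow_neg_one]
            exact inv_mul_cancel₀ (ne_of_gt h0)
        have hVconstraint : (∑ i, ∫ x, |V i x| ^ q) = 1 := by
          simp_rw [hVint]
          rw [Finset.sum_ite_eq' Finset.univ i0 (fun _ => c ^ q * t)]
          simp [hcq]
        have hVenergy : (∑ i, ∫ x, ‖fderiv ℝ (V i) x‖ ^ 2) = c ^ 2 * s := by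
          have h1 : ∀ i, (∫ x, ‖fderiv ℝ (V i) x‖ ^ 2) = if i = i0 then c ^ 2 * s else 0 := by
            intro i
            by_cases h : i = i0
            · simp only [hVdef, h, if_pos rfl]
              have : ∀ x : EuclideanSpace ℝ (Fin n),
                  ‖fderiv ℝ (fun y => c * u y) x‖ ^ 2 = c ^ 2 * ‖fderiv ℝ u x‖ ^ 2 := by
                intro x
                rw [fderiv_const_mul (hu1.differentiable (by simp) x) c, norm_smul]
                simp [mul_pow, abs_of_pos hc0, Real.norm_eq_abs]
              rw [hsdef]
              simp_rw [this]
              exact integral_const_mul _ _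
            · simp only [hVdef, if_neg h]
              have hz : ∀ x : EuclideanSpace ℝ (Fin n),
                  ‖fderiv ℝ (0 : EuclideanSpace ℝ (Fin n) → ℝ) x‖ ^ 2 = 0 := by
                intro x
                rw [show (0 : EuclideanSpace ℝ (Fin n) → ℝ) = fun _ => (0:ℝ) from rfl,
                  fderiv_const_apply]
                simp
              simp_rw [hz]
              exact integral_zero _ _
          simp_rw [h1]
          rw [Finset.sum_ite_eq' Finset.univ i0 (fun _ => c ^ 2 * s)]
          simp
        have hbV : b ≤ c ^ 2 * s := by
          have := hb ⟨V, hVsm, hVconstraint, rfl⟩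
          rwa [hVenergy] at this
        have hc2 : c ^ 2 = t ^ (-(2 * a)) := by
          rw [hcdef, ← Real.rpow_natCast (t ^ (-a)) 2, ← Real.rpow_mul ht0]
          norm_num
          ring_nf
        have h1 : b * t ^ (2 * a) ≤ s := by
          have h2 : t ^ (2 * a) * b ≤ t ^ (2 * a) * (t ^ (-(2 * a)) * s) := by
            rw [← hc2]
            exact mul_le_mul_of_nonneg_left hbV (Real.rpow_nonneg h0.le _)
          have h3 : t ^ (2 * a) * (t ^ (-(2 * a)) * s) = s := by
            rw [← mul_assoc, ← Real.rpow_add h0]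
            simp
          rw [h3] at h2
          linarith [h2]
        have h4 : Real.sqrt b * t ^ a ≤ s ^ ((1 : ℝ) / 2) := by
          have h5 : (b * t ^ (2 * a)) ^ ((1 : ℝ) / 2) ≤ s ^ ((1 : ℝ) / 2) :=
            Real.rpow_le_rpow (by positivity) h1 (by norm_num)
          have h6 : (b * t ^ (2 * a)) ^ ((1 : ℝ) / 2) = Real.sqrt b * t ^ a := by
            rw [Real.mul_rpow hb0.le (Real.rpow_nonneg h0.le _),
              ← Real.rpow_mul h0.le, Real.sqrt_eq_rpow,
              show 2 * a * ((1:ℝ) / 2) = a from by ring]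
          rwa [h6] at h5
        rw [inv_mul_eq_div, le_div_iff₀ hsb]
        linarith [h4, mul_comm (Real.sqrt b) ((∫ x, |u x| ^ q) ^ a)]
    have hfinal : K ≤ (Real.sqrt b)⁻¹ := hsharp _ hK'
    have h4 : K * Real.sqrt b ≤ 1 :=
      (mul_le_mul_of_nonneg_right hfinal hsb.le).trans_eq (inv_mul_cancel₀ hsb.ne')
    have h5 : K ^ 2 * b ≤ 1 := by
      have hsq : Real.sqrt b ^ 2 = b := Real.sq_sqrt hb0.le
      nlinarith [mul_pos hK hsb, h4]
    have h6 : b ≤ K⁻¹ ^ 2 := by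
      have hK2 : (0 : ℝ) < K ^ 2 := by positivity
      calc b = (K ^ 2)⁻¹ * (K ^ 2 * b) := by field_simp
        _ ≤ (K ^ 2)⁻¹ * 1 := mul_le_mul_of_nonneg_left h5 (by positivity)
        _ = K⁻¹ ^ 2 := by rw [mul_one, inv_pow]
    linarith
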